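/- Let X be a finite dimensional normed space, let f : X → ℝ be a K-Lipschitz function and let ε > 0. Then there exists a function g : X → ℝ of class C^∞ such that |g − f| ≤ ε on X and lip(g, B(x₀,r)) ≤ lip(f, B(x₀, r+ε)) + ε for every closed ball B(x₀,r) ⊂ X. -/

import Mathlib

open Metric Set MeasureTheory

/-- `lipOn f s` is the Lipschitz constant of `f` on `s`:
the infimum of all `L > 0` such that `|f x - f y| ≤ L * dist x y` for all `x, y ∈ s`. -/
noncomputable def lipOn {X : Type*} [PseudoMetricSpace X] (f : X → ℝ) (s : Set X) : ℝ :=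
  sInf {L : ℝ | 0 < L ∧ ∀ x ∈ s, ∀ y ∈ s, |f x - f y| ≤ L * dist x y}

/-- `f` is `K`-Lipschitz on `s`. -/
def IsLipschitzWithOn {X : Type*} [PseudoMetricSpace X] (K : ℝ) (f : X → ℝ) (s : Set X) : Prop :=
  ∀ x ∈ s, ∀ y ∈ s, |f x - f y| ≤ K * dist x y

/-! Mollify `f` by a normalized smooth bump `φ` supported in the ball of radius
`δ = ε / (K + 1)`. The convolution `φ ⋆ f` is `C^∞` and within `K δ ≤ ε` of `f`, and
`(φ ⋆ f) x - (φ ⋆ f) y` is a `φ`-average of `f (x - t) - f (y - t)` over `‖t‖ < δ`, so every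
Lipschitz constant of `f` on `B(x₀, r + δ)` is one of `φ ⋆ f` on `B(x₀, r)`. -/

open scoped NNReal Convolution
open ContinuousLinearMap (lsmul)

section lipOn

variable {X : Type*} [PseudoMetricSpace X]

theorem IsLipschitzWithOn.mono {K : ℝ} {f : X → ℝ} {s t : Set X} (hf : IsLipschitzWithOn K f s)
    (hts : t ⊆ s) : IsLipschitzWithOn K f t :=
  fun x hx y hy => hf x (hts hx) y (hts hy)

theorem LipschitzWith.isLipschitzWithOn {K : ℝ≥0} {f : X → ℝ} (hf : LipschitzWith K f)
    (s : Set X) : IsLipschitzWithOn K f s :=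
  fun x _ y _ => by simpa only [Real.dist_eq] using hf.dist_le_mul x y

theorem IsLipschitzWithOn.lipschitzWith_toNNReal {K : ℝ} {f : X → ℝ}
    (hf : IsLipschitzWithOn K f univ) : LipschitzWith K.toNNReal f :=
  LipschitzWith.of_dist_le_mul fun x y => by
    rw [Real.dist_eq]
    exact (hf x trivial y trivial).trans
      (mul_le_mul_of_nonneg_right (Real.le_coe_toNNReal K) dist_nonneg)

theorem lipOn_le_lipOn {f g : X → ℝ} {s t : Set X} {L₀ : ℝ} (hL₀ : 0 < L₀)
    (hf : IsLipschitzWithOn L₀ f s)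
    (h : ∀ L, 0 < L → IsLipschitzWithOn L f s → IsLipschitzWithOn L g t) :
    lipOn g t ≤ lipOn f s :=
  csInf_le_csInf ⟨0, fun _ hL => hL.1.le⟩ ⟨L₀, hL₀, hf⟩ fun L hL => ⟨hL.1, h L hL.1 hL.2⟩

end lipOn

namespace ContDiffBump

variable {E : Type*} [NormedAddCommGroup E] [NormedSpace ℝ E] [FiniteDimensional ℝ E]
  [MeasurableSpace E] [BorelSpace E] (μ : Measure E) (φ : ContDiffBump (0 : E))

section

variable [IsLocallyFiniteMeasure μ] [μ.IsOpenPosMeasure]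

theorem abs_integral_normed_mul_le {h : E → ℝ} {C : ℝ}
    (hh : ∀ t ∈ ball (0 : E) φ.rOut, |h t| ≤ C) : |∫ t, φ.normed μ t * h t ∂μ| ≤ C := by
  have hC : 0 ≤ C := (abs_nonneg _).trans (hh 0 (mem_ball_self φ.rOut_pos))
  rw [← Real.norm_eq_abs]
  calc ‖∫ t, φ.normed μ t * h t ∂μ‖ ≤ ∫ t, φ.normed μ t * C ∂μ := by
        refine norm_integral_le_of_norm_le ((φ.integrable_normed (μ := μ)).mul_const C)
          (ae_of_all _ fun t => ?_)
        rw [Real.norm_eq_abs, abs_mul, abs_of_nonneg (φ.nonneg_normed t)]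
        by_cases ht : t ∈ ball (0 : E) φ.rOut
        · exact mul_le_mul_of_nonneg_left (hh t ht) (φ.nonneg_normed t)
        · rw [← φ.support_normed_eq (μ := μ), Function.notMem_support] at ht
          simp [ht]
    _ = C := by rw [integral_mul_const, φ.integral_normed, one_mul]

theorem isLipschitzWithOn_normed_convolution {f : E → ℝ} (hf : Continuous f) {L r : ℝ} {x₀ : E}
    (hL : IsLipschitzWithOn L f (closedBall x₀ (r + φ.rOut))) :
    IsLipschitzWithOn L (φ.normed μ ⋆[lsmul ℝ ℝ, μ] f) (closedBall x₀ r) := by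
  intro x hx y hy
  have hint (z : E) : Integrable (fun t => φ.normed μ t * f (z - t)) μ :=
    (φ.continuous_normed.mul (hf.comp (continuous_const.sub continuous_id)))
      |>.integrable_of_hasCompactSupport φ.hasCompactSupport_normed.mul_right
  have hdiff : (φ.normed μ ⋆[lsmul ℝ ℝ, μ] f) x - (φ.normed μ ⋆[lsmul ℝ ℝ, μ] f) y =
      ∫ t, φ.normed μ t * (f (x - t) - f (y - t)) ∂μ := by
    simp only [convolution_lsmul, smul_eq_mul, ← integral_sub (hint x) (hint y), mul_sub]
  rw [hdiff]
  refine φ.abs_integral_normed_mul_le μ fun t ht => ?_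
  have hshift {z : E} (hz : z ∈ closedBall x₀ r) : z - t ∈ closedBall x₀ (r + φ.rOut) := by
    rw [mem_closedBall] at hz ⊢
    rw [mem_ball_zero_iff] at ht
    calc dist (z - t) x₀ ≤ dist (z - t) z + dist z x₀ := dist_triangle _ _ _
      _ ≤ r + φ.rOut := by rw [dist_self_sub_left]; linarith
  simpa only [dist_sub_right] using hL _ (hshift hx) _ (hshift hy)

end

theorem dist_normed_convolution_le_of_lipschitzWith [μ.IsAddHaarMeasure] {f : E → ℝ} {K : ℝ≥0}
    {ε : ℝ} (hf : LipschitzWith K f) (hε : K * φ.rOut ≤ ε) (x : E) :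
    dist ((φ.normed μ ⋆[lsmul ℝ ℝ, μ] f) x) (f x) ≤ ε :=
  φ.dist_normed_convolution_le hf.continuous.aestronglyMeasurable fun y hy =>
    (hf.dist_le_mul y x).trans <|
      (mul_le_mul_of_nonneg_left (mem_ball.1 hy).le K.coe_nonneg).trans hε

end ContDiffBump

/-- Lemma (finite dimensional case): uniform approximation of a `K`-Lipschitz function by
`C^∞` functions almost preserving local Lipschitz constants on balls. -/
theorem stmt_11 {X : Type*} [NormedAddCommGroup X] [NormedSpace ℝ X] [FiniteDimensional ℝ X]
    (K : ℝ) (f : X → ℝ) (hf : IsLipschitzWithOn K f Set.univ) (ε : ℝ) (hε : 0 < ε) :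
    ∃ g : X → ℝ,
      ContDiff ℝ (⊤ : ℕ∞) g ∧
      (∀ x : X, |g x - f x| ≤ ε) ∧
      (∀ (x₀ : X) (r : ℝ), 0 < r →
        lipOn g (closedBall x₀ r) ≤ lipOn f (closedBall x₀ (r + ε)) + ε) := by
  let _ : MeasurableSpace X := borel X
  have : BorelSpace X := ⟨rfl⟩
  set K₀ := K.toNNReal
  have hfK : LipschitzWith K₀ f := hf.lipschitzWith_toNNReal
  set δ := ε / (K₀ + 1)
  have hδ : 0 < δ := by positivity
  have hδε : δ ≤ ε := div_le_self hε.le (by simp)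
  have hKδ : K₀ * δ ≤ ε := by
    rw [mul_div_assoc', div_le_iff₀ (by positivity)]
    nlinarith
  let φ : ContDiffBump (0 : X) := ⟨δ / 2, δ, half_pos hδ, half_lt_self hδ⟩
  let μ : Measure X := Measure.addHaar
  refine ⟨φ.normed μ ⋆[lsmul ℝ ℝ, μ] f,
    φ.hasCompactSupport_normed.contDiff_convolution_left _ φ.contDiff_normed
      hfK.continuous.locallyIntegrable,
    fun x => by
      simpa only [Real.dist_eq] using φ.dist_normed_convolution_le_of_lipschitzWith μ hfK hKδ x,
    fun x₀ r _ => ?_⟩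
  have hlip : IsLipschitzWithOn (K₀ + 1 : ℝ≥0) f (closedBall x₀ (r + ε)) :=
    (hfK.weaken (le_add_of_nonneg_right zero_le_one)).isLipschitzWithOn _
  calc lipOn (φ.normed μ ⋆[lsmul ℝ ℝ, μ] f) (closedBall x₀ r) ≤ lipOn f (closedBall x₀ (r + ε)) :=
        lipOn_le_lipOn (by positivity) hlip fun L _ hL =>
          φ.isLipschitzWithOn_normed_convolution μ hfK.continuous
            (hL.mono (closedBall_subset_closedBall (by simpa using hδε)))
    _ ≤ lipOn f (closedBall x₀ (r + ε)) + ε := le_add_of_nonneg_right hε.le
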